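/- Let { j_i }_{i=1}^{k₁} and { j̃_i }_{i=1}^{k₂} be two distinct a-reduced families with k₁ ≤ k₂, and set x = Σ j_i·t_i(a,b,c) and y = Σ j̃_i·t_i(a,b,c). If { j_i } ≺ { j̃_i } in the order defined by comparing first the top index k and then the largest index where the coefficients differ, then x < y. -/
import Mathlib


/-- `sF a k = Σ_{i=0}^{k-1} a^i` (so `sF a 0 = 0`). -/
def sF (a k : ℕ) : ℕ := ∑ i ∈ Finset.range k, a ^ i

/-- `tF a b c k = a^k * c + b * sF a k`. -/
def tF (a b c k : ℕ) : ℕ := a ^ k * c + b * sF a k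

/-- A θ_{a,b}-semigroup: contains 0, closed under addition, and closed under
`x ↦ a*x + b` on nonzero elements. -/
def IsThetaSG (a b : ℕ) (S : Set ℕ) : Prop :=
  0 ∈ S ∧ (∀ x ∈ S, ∀ y ∈ S, x + y ∈ S) ∧ ∀ y ∈ S, y ≠ 0 → a * y + b ∈ S

/-- `Gset a b c` : the smallest θ_{a,b}-semigroup containing `c`. -/
def Gset (a b c : ℕ) : Set ℕ := ⋂₀ {S : Set ℕ | IsThetaSG a b S ∧ c ∈ S}

/-- `Hmon a b c` : additive submonoid generated by the `tF a b c k`. -/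
def Hmon (a b c : ℕ) : AddSubmonoid ℕ :=
  AddSubmonoid.closure {x | ∃ k, x = tF a b c k}

/-- `{j_i}_{i=1}^k` is `a`-reduced. -/
def AReduced (a k : ℕ) (j : ℕ → ℕ) : Prop :=
  (∀ i, 1 ≤ i → i ≤ k → j i ≤ a) ∧ j k ≠ 0 ∧
  ∀ m, 1 ≤ m → m ≤ k → j m = a → ∀ i, 1 ≤ i → i < m → j i = 0


lemma sF_succ (a k : ℕ) : sF a (k+1) = a * sF a k + 1 := by
  unfold sF
  rw [Finset.sum_range_succ']
  simp [pow_succ, Finset.mul_sum, mul_comm]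

lemma tF_succ (a b c k : ℕ) : tF a b c (k+1) = a * tF a b c k + b := by
  unfold tF; rw [sF_succ]; ring

lemma tF_pos (a b c : ℕ) (ha : 0 < a) (hc : 0 < c) (k : ℕ) : 0 < tF a b c k := by
  unfold tF; positivity

lemma tF_mono (a b c : ℕ) (ha : 0 < a) (hb : 0 < b) (hc : 0 < c) :
    StrictMono (tF a b c) := by
  apply strictMono_nat_of_lt_succ
  intro k
  rw [tF_succ]
  have h := tF_pos a b c ha hc k
  nlinarith

lemma key (a b c : ℕ) (ha : 0 < a) (hb : 0 < b) (hc : 0 < c) (m : ℕ) (j : ℕ → ℕ)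
    (hle : ∀ i, 1 ≤ i → i ≤ m → j i ≤ a)
    (hred : ∀ i, 1 ≤ i → i ≤ m → j i = a → ∀ i', 1 ≤ i' → i' < i → j i' = 0) :
    ∑ i ∈ Finset.Icc 1 m, j i * tF a b c i < tF a b c (m+1) := by
  induction m with
  | zero => simpa using tF_pos a b c ha hc 1
  | succ m ih =>
    rw [Finset.sum_Icc_succ_top (Nat.one_le_iff_ne_zero.mpr (Nat.succ_ne_zero m))]
    rcases eq_or_lt_of_le (hle (m+1) (Nat.le_add_left 1 m) le_rfl) with heq | hlt
    · have hzero : ∀ i ∈ Finset.Icc 1 m, j i * tF a b c i = 0 := by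
        intro i hi
        rw [Finset.mem_Icc] at hi
        rw [hred (m+1) (Nat.le_add_left 1 m) le_rfl heq i hi.1 (Nat.lt_succ_of_le hi.2)]
        ring
      rw [Finset.sum_eq_zero hzero, heq, tF_succ a b c (m+1)]
      omega
    · have h1 : ∑ i ∈ Finset.Icc 1 m, j i * tF a b c i < tF a b c (m+1) :=
        ih (fun i h1 h2 => hle i h1 (Nat.le_succ_of_le h2))
          (fun i h1 h2 hia => hred i h1 (Nat.le_succ_of_le h2) hia)
      have h2 : (j (m+1) + 1) * tF a b c (m+1) ≤ a * tF a b c (m+1) :=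
        Nat.mul_le_mul_right _ hlt
      rw [tF_succ a b c (m+1)]
      calc ∑ i ∈ Finset.Icc 1 m, j i * tF a b c i + j (m+1) * tF a b c (m+1)
          < tF a b c (m+1) + j (m+1) * tF a b c (m+1) := by omega
        _ = (j (m+1) + 1) * tF a b c (m+1) := by ring
        _ ≤ a * tF a b c (m+1) := h2
        _ < a * tF a b c (m+1) + b := by omega

lemma split_sum (f : ℕ → ℕ) (M k : ℕ) (h : M ≤ k) :
    ∑ i ∈ Finset.Icc 1 k, f i
      = ∑ i ∈ Finset.Icc 1 M, f i + ∑ i ∈ Finset.Ioc M k, f i := by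
  rw [show Finset.Icc 1 k = Finset.Ioc 0 k from Finset.Icc_add_one_left_eq_Ioc 0 k,
      show Finset.Icc 1 M = Finset.Ioc 0 M from Finset.Icc_add_one_left_eq_Ioc 0 M,
      Finset.sum_Ioc_consecutive f (Nat.zero_le M) h]

theorem stmt14 (a b c : ℕ) (ha : 0 < a) (hb : 0 < b) (hc : 2 ≤ c)
    (k₁ k₂ : ℕ) (h1 : 1 ≤ k₁) (hk : k₁ ≤ k₂)
    (j j' : ℕ → ℕ) (hj : AReduced a k₁ j) (hj' : AReduced a k₂ j')
    (hprec : k₁ < k₂ ∨ (k₁ = k₂ ∧ ∃ M, 1 ≤ M ∧ M ≤ k₁ ∧ j M < j' M ∧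
      ∀ i, M < i → i ≤ k₁ → j i = j' i)) :
    ∑ i ∈ Finset.Icc 1 k₁, j i * tF a b c i <
      ∑ i ∈ Finset.Icc 1 k₂, j' i * tF a b c i := by
  have hc0 : 0 < c := by omega
  rcases hprec with hlt | ⟨heq, M, hM1, hMk, hjM, htail⟩
  · have hx : ∑ i ∈ Finset.Icc 1 k₁, j i * tF a b c i < tF a b c (k₁+1) :=
      key a b c ha hb hc0 k₁ j hj.1 hj.2.2
    have h2 : tF a b c (k₁+1) ≤ tF a b c k₂ :=
      (tF_mono a b c ha hb hc0).monotone hlt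
    have h3 : tF a b c k₂ ≤ j' k₂ * tF a b c k₂ :=
      Nat.le_mul_of_pos_left _ (Nat.pos_of_ne_zero hj'.2.1)
    have h4 : j' k₂ * tF a b c k₂ ≤ ∑ i ∈ Finset.Icc 1 k₂, j' i * tF a b c i :=
      Finset.single_le_sum (f := fun i => j' i * tF a b c i)
        (fun i _ => Nat.zero_le _) (Finset.mem_Icc.mpr ⟨le_trans h1 hk, le_rfl⟩)
    omega
  · subst heq
    rw [split_sum _ M k₁ hMk, split_sum _ M k₁ hMk]
    have htl : ∑ i ∈ Finset.Ioc M k₁, j i * tF a b c i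
        = ∑ i ∈ Finset.Ioc M k₁, j' i * tF a b c i := by
      apply Finset.sum_congr rfl
      intro i hi
      rw [Finset.mem_Ioc] at hi
      rw [htail i hi.1 hi.2]
    rw [htl]
    have hhead : ∑ i ∈ Finset.Icc 1 M, j i * tF a b c i
        < ∑ i ∈ Finset.Icc 1 M, j' i * tF a b c i := by
      obtain ⟨m, rfl⟩ : ∃ m, M = m + 1 := ⟨M - 1, by omega⟩
      rw [Finset.sum_Icc_succ_top (Nat.le_add_left 1 m),
          Finset.sum_Icc_succ_top (Nat.le_add_left 1 m)]
      have hkey : ∑ i ∈ Finset.Icc 1 m, j i * tF a b c i < tF a b c (m+1) := by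
        apply key a b c ha hb hc0 m j
        · exact fun i hi1 hi2 => hj.1 i hi1 (by omega)
        · exact fun i hi1 hi2 hia => hj.2.2 i hi1 (by omega) hia
      have h5 : (j (m+1) + 1) * tF a b c (m+1) ≤ j' (m+1) * tF a b c (m+1) :=
        Nat.mul_le_mul_right _ hjM
      have h6 : (j (m+1) + 1) * tF a b c (m+1)
          = tF a b c (m+1) + j (m+1) * tF a b c (m+1) := by ring
      omega
    omega
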